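/- arXiv:2212.06945 — 2 statements merged into one kernel-verified Lean document; each statement's English description precedes it below -/
import Mathlib

section
/- Let X be a Banach space, φ: X → (−∞,∞] lower semicontinuous, U × V a convex neighborhood of (x̄, x̄*) with x̄* ∈ ∂φ(x̄), ε > 0, and assume the subgradient-inequality condition: every (u,u*) ∈ (U_ε × V) ∩ gph ∂φ satisfies φ(x) ≥ φ(u) + ⟨u*, x − u⟩ for all x ∈ U. Define φ̂(x) := sup{ φ(u) + ⟨u*, x − u⟩ : (u,u*) ∈ (U_ε × V) ∩ gph ∂φ } for x ∈ X. Then φ̂ is convex, lower semicontinuous, satisfies φ̂ ≤ φ on U, and, provided U ⊂ B_{r₁}(x̄) and V ⊂ B_{r₂}(x̄*) with r₁(‖x̄*‖ + r₂) < ε, one has the equivalence: (x, x*) ∈ (U_ε × V) ∩ gph ∂φ if and only if (x, x*) ∈ (U × V) ∩ gph ∂φ̂ and φ̂(x) = φ(x). -/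
/-!
`φ̂` is a supremum of continuous affine functions, hence convex and lower semicontinuous, and the
subgradient inequality on `U` gives `φ̂ ≤ φ` there. Each generating affine function touches `φ̂` at
its base point, which gives the forward implication. Conversely, if `φ̂ x = φ x` and `x* ∈ ∂φ̂(x)`,
then `y ↦ φ x + ⟨x*, y − x⟩` minorizes `φ` on the open set `U`, so `x*` is a Fréchet subgradient
of `φ` at `x`; testing the minorant at `x̄` and using `|⟨x*, x̄ − x⟩| ≤ (‖x̄*‖ + r₂) r₁ < ε` shows
`x ∈ U_ε`.
-/

open Filter Topology

variable {X : Type*} [NormedAddCommGroup X] [NormedSpace ℝ X]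

/-- The Fréchet `ε`-subdifferential of `φ` at `x`. -/
def EpsSubdiff (φ : X → EReal) (ε : ℝ) (x : X) : Set (X →L[ℝ] ℝ) :=
  {xs | ∀ η : ℝ, 0 < η → ∃ δ : ℝ, 0 < δ ∧ ∀ y : X, ‖y - x‖ < δ →
    φ x + ((xs (y - x) - (ε + η) * ‖y - x‖ : ℝ) : EReal) ≤ φ y}

/-- The limiting (Mordukhovich) subdifferential of `φ` at `xbar`:
sequential outer limit (with weak* convergence of subgradients) of
`ε`-subdifferentials along `φ`-attentive convergence. -/
def LimitingSubdiff (φ : X → EReal) (xbar : X) : Set (X →L[ℝ] ℝ) :=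
  {xs | ∃ (xk : ℕ → X) (xsk : ℕ → X →L[ℝ] ℝ) (εk : ℕ → ℝ),
    (∀ k, 0 ≤ εk k) ∧ Tendsto εk atTop (𝓝 0) ∧
    Tendsto xk atTop (𝓝 xbar) ∧
    Tendsto (fun k => φ (xk k)) atTop (𝓝 (φ xbar)) ∧
    (∀ k, xsk k ∈ EpsSubdiff φ (εk k) (xk k)) ∧
    (∀ v : X, Tendsto (fun k => xsk k v) atTop (𝓝 (xs v)))}

/-- The convex-analysis subdifferential of an extended-real-valued function. -/
def ConvexSubdiff (ψ : X → EReal) (x : X) : Set (X →L[ℝ] ℝ) :=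
  {xs | ∀ y : X, ψ x + ((xs (y - x) : ℝ) : EReal) ≤ ψ y}

/-- Convexity of an `EReal`-valued function on a set. -/
def ERealConvexOn (s : Set X) (ψ : X → EReal) : Prop :=
  ∀ x ∈ s, ∀ y ∈ s, ∀ t : ℝ, 0 ≤ t → t ≤ 1 →
    ψ (t • x + (1 - t) • y) ≤ (t : EReal) * ψ x + ((1 - t : ℝ) : EReal) * ψ y

/-- Rockafellar's variational convexity of `φ` at `xbar` for
`xs ∈ ∂φ(xbar)`. -/
def VariationallyConvexAt (φ : X → EReal) (xbar : X) (xs : X →L[ℝ] ℝ) : Prop :=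
  ∃ (U : Set X) (V : Set (X →L[ℝ] ℝ)),
    IsOpen U ∧ Convex ℝ U ∧ xbar ∈ U ∧ IsOpen V ∧ Convex ℝ V ∧ xs ∈ V ∧
    ∃ (φhat : X → EReal) (ε : ℝ), 0 < ε ∧
      ERealConvexOn Set.univ φhat ∧ LowerSemicontinuous φhat ∧
      (∀ x ∈ U, φhat x ≤ φ x) ∧
      (∀ (x : X) (v : X →L[ℝ] ℝ),
        (x ∈ U ∧ φ x < φ xbar + (ε : EReal) ∧ v ∈ V ∧
            v ∈ LimitingSubdiff φ x) ↔
        (x ∈ U ∧ v ∈ V ∧ v ∈ ConvexSubdiff φhat x)) ∧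
      (∀ (x : X) (v : X →L[ℝ] ℝ),
        x ∈ U ∧ v ∈ V ∧ v ∈ ConvexSubdiff φhat x → φ x = φhat x)

theorem ERealConvexOn.iSup {ι : Sort*} {s : Set X} {f : ι → X → EReal}
    (hf : ∀ i, ERealConvexOn s (f i)) : ERealConvexOn s fun x => ⨆ i, f i x := by
  intro x hx y hy t ht₀ ht₁
  refine iSup_le fun i => (hf i x hx y hy t ht₀ ht₁).trans ?_
  have ht₀' : (0 : EReal) ≤ t := by exact_mod_cast ht₀
  have ht₁' : (0 : EReal) ≤ ((1 - t : ℝ) : EReal) := by exact_mod_cast sub_nonneg.2 ht₁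
  gcongr
  · exact le_iSup (f · x) i
  · exact le_iSup (f · y) i

theorem ConvexOn.erealConvexOn {s : Set X} {f : X → ℝ} (hf : ConvexOn ℝ s f) :
    ERealConvexOn s fun x => (f x : EReal) := by
  intro x hx y hy t ht₀ ht₁
  have h := hf.2 hx hy ht₀ (sub_nonneg.2 ht₁) (add_sub_cancel t 1)
  simp only [smul_eq_mul] at h
  beta_reduce
  exact_mod_cast h

theorem convexOn_const_add_apply_sub (b : ℝ) (ℓ : X →L[ℝ] ℝ) (u : X) :
    ConvexOn ℝ Set.univ fun x => b + ℓ (x - u) := by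
  refine ⟨convex_univ, fun x _ y _ s t _ _ hst => le_of_eq ?_⟩
  simp only [map_sub, map_add, map_smul, smul_eq_mul]
  linear_combination (ℓ u - b) * hst

theorem EReal.lt_coe_add_of_add_coe_le {y : EReal} {a c ε : ℝ} (h : y + a ≤ c) (ha : -ε < a) :
    y < ((c + ε : ℝ) : EReal) := by
  induction y using EReal.rec with
  | bot => exact EReal.bot_lt_coe _
  | top => simp at h
  | coe y =>
    norm_cast at h ⊢
    linarith

theorem mem_epsSubdiff_zero_of_eventually {φ : X → EReal} {x : X} {xs : X →L[ℝ] ℝ}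
    (h : ∀ᶠ y in 𝓝 x, φ x + ((xs (y - x) : ℝ) : EReal) ≤ φ y) : xs ∈ EpsSubdiff φ 0 x := by
  intro η hη
  obtain ⟨δ, hδ, hball⟩ := Metric.eventually_nhds_iff.1 h
  refine ⟨δ, hδ, fun y hy => le_trans ?_ (hball (by rwa [dist_eq_norm]))⟩
  gcongr
  nlinarith [norm_nonneg (y - x)]

theorem epsSubdiff_zero_subset_limitingSubdiff (φ : X → EReal) (x : X) :
    EpsSubdiff φ 0 x ⊆ LimitingSubdiff φ x := fun _ h =>
  ⟨fun _ => x, fun _ => _, fun _ => 0, fun _ => le_rfl, tendsto_const_nhds, tendsto_const_nhds,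
    tendsto_const_nhds, fun _ => h, fun _ => tendsto_const_nhds⟩

theorem abs_apply_sub_lt_of_mem_ball {x xbar : X} {xs xsbar : X →L[ℝ] ℝ} {r₁ r₂ ε : ℝ}
    (hx : x ∈ Metric.ball xbar r₁) (hxs : xs ∈ Metric.ball xsbar r₂)
    (h : r₁ * (‖xsbar‖ + r₂) < ε) : |xs (xbar - x)| < ε := by
  have hx' : ‖xbar - x‖ < r₁ := by rwa [← dist_eq_norm, dist_comm]
  calc |xs (xbar - x)| ≤ ‖xs‖ * ‖xbar - x‖ := xs.le_opNorm _
    _ < (‖xsbar‖ + r₂) * r₁ :=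
      mul_lt_mul'' (norm_lt_of_mem_ball hxs) hx' (norm_nonneg _) (norm_nonneg _)
    _ < ε := by linarith

section AffineSupremum

variable {φ : X → EReal} {P : X → (X →L[ℝ] ℝ) → Prop}

theorem le_iSup_affine {u : X} {us : X →L[ℝ] ℝ} (h : P u us) (y : X) :
    φ u + ((us (y - u) : ℝ) : EReal) ≤
      ⨆ (u : X) (us : X →L[ℝ] ℝ) (_ : P u us), φ u + ((us (y - u) : ℝ) : EReal) :=
  le_iSup₂_of_le u us (le_iSup_of_le h le_rfl)

variable (hP : ∀ u us, P u us → ∃ b : ℝ, φ u = b)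
include hP

theorem erealConvexOn_iSup_affine :
    ERealConvexOn Set.univ fun x =>
      ⨆ (u : X) (us : X →L[ℝ] ℝ) (_ : P u us), φ u + ((us (x - u) : ℝ) : EReal) :=
  ERealConvexOn.iSup fun u => ERealConvexOn.iSup fun us => ERealConvexOn.iSup fun h => by
    obtain ⟨b, hb⟩ := hP u us h
    simp_rw [hb, ← EReal.coe_add]
    exact (convexOn_const_add_apply_sub b us u).erealConvexOn

theorem lowerSemicontinuous_iSup_affine :
    LowerSemicontinuous fun x =>
      ⨆ (u : X) (us : X →L[ℝ] ℝ) (_ : P u us), φ u + ((us (x - u) : ℝ) : EReal) :=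
  lowerSemicontinuous_iSup fun u => lowerSemicontinuous_iSup fun us =>
    lowerSemicontinuous_iSup fun h => by
      obtain ⟨b, hb⟩ := hP u us h
      simp_rw [hb, ← EReal.coe_add]
      exact (continuous_coe_real_ereal.comp (by fun_prop)).lowerSemicontinuous

end AffineSupremum

theorem convexification_properties_general
    (φ : X → EReal)
    (hnb : ∀ x, φ x ≠ ⊥) (xbar : X) (hdom : φ xbar ≠ ⊤)
    (xsbar : X →L[ℝ] ℝ)
    (U : Set X) (V : Set (X →L[ℝ] ℝ)) (ε r₁ r₂ : ℝ)
    (hU : IsOpen U) (hxU : xbar ∈ U)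
    (hineq : ∀ (u : X) (us : X →L[ℝ] ℝ),
      u ∈ U → φ u < φ xbar + (ε : EReal) → us ∈ V →
      us ∈ LimitingSubdiff φ u →
      ∀ x ∈ U, φ u + ((us (x - u) : ℝ) : EReal) ≤ φ x)
    (hUr : U ⊆ Metric.ball xbar r₁) (hVr : V ⊆ Metric.ball xsbar r₂)
    (hrε : r₁ * (‖xsbar‖ + r₂) < ε)
    (φhat : X → EReal)
    (hφhat : φhat = fun x =>
      ⨆ (u : X) (us : X →L[ℝ] ℝ)
        (_ : u ∈ U ∧ φ u < φ xbar + (ε : EReal) ∧ us ∈ V ∧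
          us ∈ LimitingSubdiff φ u),
        φ u + ((us (x - u) : ℝ) : EReal)) :
    ERealConvexOn Set.univ φhat ∧ LowerSemicontinuous φhat ∧
    (∀ x ∈ U, φhat x ≤ φ x) ∧
    (∀ (x : X) (xs : X →L[ℝ] ℝ),
      (x ∈ U ∧ φ x < φ xbar + (ε : EReal) ∧ xs ∈ V ∧
        xs ∈ LimitingSubdiff φ x) ↔
      (x ∈ U ∧ xs ∈ V ∧ xs ∈ ConvexSubdiff φhat x ∧ φhat x = φ x)) := by
  have hfinite : ∀ u us, u ∈ U ∧ φ u < φ xbar + ε ∧ us ∈ V ∧ us ∈ LimitingSubdiff φ u →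
      ∃ b : ℝ, φ u = b := fun u _ h => ⟨_, (EReal.coe_toReal h.2.1.ne_top (hnb u)).symm⟩
  have hle (x : X) (hx : x ∈ U) : φhat x ≤ φ x := hφhat ▸
    iSup₂_le fun u us => iSup_le fun h => hineq u us h.1 h.2.1 h.2.2.1 h.2.2.2 x hx
  refine ⟨hφhat ▸ erealConvexOn_iSup_affine hfinite,
    hφhat ▸ lowerSemicontinuous_iSup_affine hfinite, hle,
    fun x xs => ⟨fun hQ => ?_, fun ⟨hx, hxs, hcs, heq⟩ => ?_⟩⟩
  · have hmin (y : X) : φ x + ((xs (y - x) : ℝ) : EReal) ≤ φhat y := hφhat ▸ le_iSup_affine hQ y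
    have heq : φhat x = φ x := (hle x hQ.1).antisymm (by simpa using hmin x)
    exact ⟨hQ.1, hQ.2.2.1, fun y => heq ▸ hmin y, heq⟩
  · have hloc : ∀ y ∈ U, φ x + ((xs (y - x) : ℝ) : EReal) ≤ φ y := fun y hy =>
      heq ▸ (hcs y).trans (hle y hy)
    obtain ⟨a, ha⟩ : ∃ a : ℝ, φ xbar = a := ⟨_, (EReal.coe_toReal hdom (hnb xbar)).symm⟩
    have hxε : φ x < φ xbar + ε := by
      rw [ha, ← EReal.coe_add]
      exact EReal.lt_coe_add_of_add_coe_le (ha ▸ hloc xbar hxU)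
        (abs_lt.1 (abs_apply_sub_lt_of_mem_ball (hUr hx) (hVr hxs) hrε)).1
    exact ⟨hx, hxε, hxs, epsSubdiff_zero_subset_limitingSubdiff φ x
      (mem_epsSubdiff_zero_of_eventually (eventually_of_mem (hU.mem_nhds hx) hloc))⟩

/-- properties of the convexification
`φ̂(x) = sup { φ(u) + ⟨u*, x − u⟩ : (u,u*) ∈ (U_ε × V) ∩ gph ∂φ }`. -/
theorem convexification_properties
    [CompleteSpace X] (φ : X → EReal) (hlsc : LowerSemicontinuous φ)
    (hnb : ∀ x, φ x ≠ ⊥) (xbar : X) (hdom : φ xbar ≠ ⊤)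
    (xsbar : X →L[ℝ] ℝ) (hsub : xsbar ∈ LimitingSubdiff φ xbar)
    (U : Set X) (V : Set (X →L[ℝ] ℝ)) (ε r₁ r₂ : ℝ)
    (hU : IsOpen U) (hUc : Convex ℝ U) (hxU : xbar ∈ U)
    (hV : IsOpen V) (hVc : Convex ℝ V) (hxV : xsbar ∈ V) (hε : 0 < ε)
    (hineq : ∀ (u : X) (us : X →L[ℝ] ℝ),
      u ∈ U → φ u < φ xbar + (ε : EReal) → us ∈ V →
      us ∈ LimitingSubdiff φ u →
      ∀ x ∈ U, φ u + ((us (x - u) : ℝ) : EReal) ≤ φ x)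
    (hUr : U ⊆ Metric.ball xbar r₁) (hVr : V ⊆ Metric.ball xsbar r₂)
    (hrε : r₁ * (‖xsbar‖ + r₂) < ε)
    (φhat : X → EReal)
    (hφhat : φhat = fun x =>
      ⨆ (u : X) (us : X →L[ℝ] ℝ)
        (_ : u ∈ U ∧ φ u < φ xbar + (ε : EReal) ∧ us ∈ V ∧
          us ∈ LimitingSubdiff φ u),
        φ u + ((us (x - u) : ℝ) : EReal)) :
    ERealConvexOn Set.univ φhat ∧ LowerSemicontinuous φhat ∧
    (∀ x ∈ U, φhat x ≤ φ x) ∧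
    (∀ (x : X) (xs : X →L[ℝ] ℝ),
      (x ∈ U ∧ φ x < φ xbar + (ε : EReal) ∧ xs ∈ V ∧
        xs ∈ LimitingSubdiff φ x) ↔
      (x ∈ U ∧ xs ∈ V ∧ xs ∈ ConvexSubdiff φhat x ∧ φhat x = φ x)) :=
  convexification_properties_general φ hnb xbar hdom xsbar U V ε r₁ r₂ hU hxU hineq hUr hVr hrε φhat
    hφhat
end

section
/- Let X be a Banach space and φ: X → (−∞,∞] lower semicontinuous. If φ is variationally convex at x̄ for x̄* ∈ ∂φ(x̄), then ∂φ is φ-locally maximal monotone around (x̄, x̄*): there exist a neighborhood U × V of (x̄, x̄*), ε > 0, and a maximal monotone operator T̄: X ⇉ X* such that gph T̄ ∩ (U_ε × V) = gph ∂φ ∩ (U_ε × V), where U_ε = { x ∈ U : φ(x) < φ(x̄) + ε }. -/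
/-!
On `U × V` the localized limiting subdifferential of `φ` is the convex subdifferential of `φ̂`,
so it suffices that `∂φ̂` be maximal monotone. When `φ̂` is proper this is Rockafellar's theorem.
Otherwise the lower semicontinuous convex `φ̂` takes only the values `⊥` and `⊤`, and it is not
`⊥` on `U` (every functional would be a subgradient there, forcing `φ = φ̂ = ⊥`); so `φ = ⊤` on
`U` and the localization is empty.

Rockafellar's theorem: let `(x̂, ŝ)` be monotonically related to `∂f` and `f y < ⊤`. Ekeland's
principle applied to `f + c`, for a convex penalty `c` vanishing at `x̂`, gives an approximate
minimizer `u`, and separating the epigraph of `f` from the hypograph of the concave minorant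
this provides yields `v ∈ ∂f(u)` with `c u - v (x - u) ≤ c x + δ ‖x - u‖`. Testing at `x = x̂`
against `(v - ŝ) (u - x̂) ≥ 0` forces `u = x̂`, whence `f x̂ + ŝ (y - x̂) ≤ f y + k ‖y - x̂‖`
for every `k > 0`.
-/

open Filter Topology

variable {X : Type*} [NormedAddCommGroup X] [NormedSpace ℝ X]

/-- Monotonicity of a set-valued operator `T : X ⇉ X*`. -/
def MonotoneOperator (T : X → Set (X →L[ℝ] ℝ)) : Prop :=
  ∀ x₁ x₂ : X, ∀ xs₁ ∈ T x₁, ∀ xs₂ ∈ T x₂, 0 ≤ (xs₁ - xs₂) (x₁ - x₂)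

/-- Maximal monotonicity of a set-valued operator `T : X ⇉ X*`. -/
def MaximalMonotoneOperator (T : X → Set (X →L[ℝ] ℝ)) : Prop :=
  MonotoneOperator T ∧
    ∀ S : X → Set (X →L[ℝ] ℝ), MonotoneOperator S →
      (∀ x, T x ⊆ S x) → ∀ x, S x = T x


open Set

section Ekeland

variable {Y : Type*} [MetricSpace Y] {G : Y → ℝ} {ε : ℝ}

def ekelandSet (G : Y → ℝ) (ε : ℝ) (x : Y) : Set Y := {y | G y + ε * dist y x ≤ G x}

lemma self_mem_ekelandSet (x : Y) : x ∈ ekelandSet G ε x := by simp [ekelandSet]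

lemma ekelandSet_subset (hε : 0 ≤ ε) {x y : Y} (hy : y ∈ ekelandSet G ε x) :
    ekelandSet G ε y ⊆ ekelandSet G ε x := fun z (hz : G z + ε * dist z y ≤ G y) => by
  have hy : G y + ε * dist y x ≤ G x := hy
  show G z + ε * dist z x ≤ G x
  nlinarith [dist_triangle z y x]

lemma isClosed_ekelandSet (hG : LowerSemicontinuous G) (x : Y) :
    IsClosed (ekelandSet G ε x) :=
  (hG.add (continuous_const.mul (continuous_id.dist continuous_const)).lowerSemicontinuous
    ).isClosed_preimage (G x)

lemma exists_mem_ekelandSet_forall_mul_dist_le (hε : 0 ≤ ε) (hG : BddBelow (range G))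
    (x : Y) {δ : ℝ} (hδ : 0 < δ) :
    ∃ y ∈ ekelandSet G ε x, ∀ z ∈ ekelandSet G ε y, ε * dist z y ≤ δ := by
  have hne : (G '' ekelandSet G ε x).Nonempty := ⟨G x, x, self_mem_ekelandSet x, rfl⟩
  obtain ⟨_, ⟨y, hyS, rfl⟩, hy⟩ := exists_lt_of_csInf_lt hne (lt_add_of_pos_right _ hδ)
  refine ⟨y, hyS, fun z hz => ?_⟩
  have hinf : sInf (G '' ekelandSet G ε x) ≤ G z :=
    csInf_le (hG.mono (image_subset_range _ _)) ⟨z, ekelandSet_subset hε hyS hz, rfl⟩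
  have : G z + ε * dist z y ≤ G y := hz
  linarith

/-- Ekeland's variational principle. -/
theorem LowerSemicontinuous.exists_le_forall_le_add_mul_dist [CompleteSpace Y]
    (hG : LowerSemicontinuous G) (hbdd : BddBelow (range G)) (hε : 0 < ε) (x₀ : Y) :
    ∃ u, G u ≤ G x₀ ∧ ∀ x, G u ≤ G x + ε * dist x u := by
  set S := ekelandSet G ε
  choose next hnext hnext_small using fun (x : Y) (n : ℕ) =>
    exists_mem_ekelandSet_forall_mul_dist_le hε.le hbdd x (Nat.one_div_pos_of_nat (n := n))
  let seq : ℕ → Y := fun n => Nat.rec (next x₀ 0) (fun n x => next x (n + 1)) n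
  have hseq_small : ∀ n, ∀ z ∈ S (seq n), ε * dist z (seq n) ≤ 1 / (n + 1) := by
    rintro (_ | n)
    exacts [hnext_small x₀ 0, hnext_small (seq n) (n + 1)]
  have hmem : ∀ m n, m ≤ n → seq n ∈ S (seq m) := fun m n hmn =>
    antitone_nat_of_succ_le (f := fun n => S (seq n))
      (fun n => ekelandSet_subset hε.le (hnext _ _)) hmn (self_mem_ekelandSet _)
  -- the nested sets `S (seq n)` shrink to a point `u`, and then `S u = {u}`
  have hclose : ∀ r > 0, ∃ N, ∀ z ∈ S (seq N), dist z (seq N) < r := fun r hr => by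
    obtain ⟨N, hN⟩ := exists_nat_one_div_lt (mul_pos hε hr)
    exact ⟨N, fun z hz => lt_of_mul_lt_mul_left ((hseq_small N z hz).trans_lt hN) hε.le⟩
  obtain ⟨u, hu⟩ := cauchySeq_tendsto_of_complete <| Metric.cauchySeq_iff'.2 fun r hr => by
    obtain ⟨N, hN⟩ := hclose r hr
    exact ⟨N, fun n hn => hN _ (hmem N n hn)⟩
  have hu_mem : ∀ n, u ∈ S (seq n) := fun n =>
    (isClosed_ekelandSet hG _).mem_of_tendsto hu (eventually_atTop.2 ⟨n, hmem n⟩)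
  have hS_u : ∀ w ∈ S u, w = u := fun w hw => eq_of_forall_dist_le fun r hr => by
    obtain ⟨N, hN⟩ := hclose (r / 2) (half_pos hr)
    have hw' := hN w (ekelandSet_subset hε.le (hu_mem N) hw)
    have hu' := hN u (hu_mem N)
    linarith [dist_triangle_right w u (seq N)]
  refine ⟨u, ?_, fun x => ?_⟩
  · have : G u + ε * dist u x₀ ≤ G x₀ := ekelandSet_subset hε.le (hnext x₀ 0) (hu_mem 0)
    nlinarith [dist_nonneg (x := u) (y := x₀)]
  · by_contra! hx
    obtain rfl := hS_u x hx.le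
    simp at hx

end Ekeland

lemma LowerSemicontinuous.add_coe_real {Y : Type*} [TopologicalSpace Y] {f : Y → EReal}
    (hf : LowerSemicontinuous f) {c : Y → ℝ} (hc : Continuous c) :
    LowerSemicontinuous fun x => f x + (c x : EReal) :=
  hf.add' (continuous_coe_real_ereal.comp hc).lowerSemicontinuous fun _ =>
    EReal.continuousAt_add (Or.inr (EReal.coe_ne_bot _)) (Or.inr (EReal.coe_ne_top _))

theorem LowerSemicontinuous.exists_le_forall_le_add_mul_dist_of_ereal {Y : Type*}
    [MetricSpace Y] [CompleteSpace Y] {g : Y → EReal} (hg : LowerSemicontinuous g) {m : ℝ}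
    (hm : ∀ x, (m : EReal) ≤ g x) {x₀ : Y} (hx₀ : g x₀ ≠ ⊤) {ε : ℝ} (hε : 0 < ε) :
    ∃ u, g u ≤ g x₀ ∧ ∀ x, g u ≤ g x + (ε * dist x u : ℝ) := by
  obtain ⟨C, hC, -⟩ := EReal.exists_between_coe_real (lt_top_iff_ne_top.2 hx₀)
  set G : Y → ℝ := fun x => (min (g x) C).toReal
  have hlow : ∀ x, ((min m C : ℝ) : EReal) ≤ min (g x) C := fun x =>
    le_min ((EReal.coe_le_coe_iff.2 (min_le_left m C)).trans (hm x))
      (EReal.coe_le_coe_iff.2 (min_le_right m C))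
  have hG : ∀ x, (G x : EReal) = min (g x) C := fun x =>
    EReal.coe_toReal (ne_top_of_le_ne_top (EReal.coe_ne_top C) (min_le_right _ _))
      (ne_bot_of_le_ne_bot (EReal.coe_ne_bot _) (hlow x))
  have hG_lsc : LowerSemicontinuous G := fun x r hr => by
    have hr' : (r : EReal) < min (g x) C := by rw [← hG]; exact_mod_cast hr
    filter_upwards [hg.inf lowerSemicontinuous_const x r hr'] with y hy
    rw [← hG] at hy
    exact_mod_cast hy
  have hG_bdd : BddBelow (range G) := ⟨min m C, by
    rintro _ ⟨x, rfl⟩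
    rw [← EReal.coe_le_coe_iff, hG]
    exact hlow x⟩
  obtain ⟨u, hu₀, hu⟩ := hG_lsc.exists_le_forall_le_add_mul_dist hG_bdd hε x₀
  have hGx₀ : (G x₀ : EReal) = g x₀ := by rw [hG, min_eq_left hC.le]
  have hGu : (G u : EReal) = g u := by
    have : min (g u) C < C := (hG u ▸ EReal.coe_le_coe_iff.2 hu₀).trans_lt (hGx₀ ▸ hC)
    rw [hG, min_eq_left ((min_lt_iff.1 this).resolve_right (lt_irrefl _)).le]
  refine ⟨u, by rw [← hGu, ← hGx₀]; exact_mod_cast hu₀, fun x => ?_⟩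
  calc g u = G u := hGu.symm
    _ ≤ (G x + ε * dist x u : ℝ) := EReal.coe_le_coe_iff.2 (hu x)
    _ ≤ g x + (ε * dist x u : ℝ) := by
      rw [EReal.coe_add, hG]
      exact add_le_add_left (min_le_left _ _) _

def realEpigraph {E : Type*} (f : E → EReal) : Set (E × ℝ) := {p | f p.1 ≤ p.2}

lemma LowerSemicontinuous.isClosed_realEpigraph {E : Type*} [TopologicalSpace E]
    {f : E → EReal} (hf : LowerSemicontinuous f) : IsClosed (realEpigraph f) :=
  hf.isClosed_epigraph.preimage
    (continuous_fst.prodMk (continuous_coe_real_ereal.comp continuous_snd))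

lemma ERealConvexOn.convex_realEpigraph {f : X → EReal} (hf : ERealConvexOn univ f) :
    Convex ℝ (realEpigraph f) := by
  rintro ⟨x, s⟩ (hx : f x ≤ s) ⟨y, t⟩ (hy : f y ≤ t) a b ha hb hab
  obtain rfl : b = 1 - a := by linarith
  calc f (a • x + (1 - a) • y) ≤ (a : EReal) * f x + ((1 - a : ℝ) : EReal) * f y :=
        hf x (mem_univ x) y (mem_univ y) a ha (by linarith)
    _ ≤ (a : EReal) * s + ((1 - a : ℝ) : EReal) * t :=
        add_le_add (mul_le_mul_of_nonneg_left hx (by exact_mod_cast ha))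
          (mul_le_mul_of_nonneg_left hy (by exact_mod_cast hb))
    _ = ((a * s + (1 - a) * t : ℝ) : EReal) := by
        rw [← EReal.coe_mul, ← EReal.coe_mul, ← EReal.coe_add]

/-- For `ℓ (0, 1) ≠ 0`, the hyperplane `ℓ = s` in `X × ℝ` is the graph of
`x ↦ hyperplaneSlope ℓ x + s / ℓ (0, 1)`. -/
noncomputable def ContinuousLinearMap.hyperplaneSlope (ℓ : X × ℝ →L[ℝ] ℝ) : X →L[ℝ] ℝ :=
  -(ℓ (0, 1))⁻¹ • ℓ.comp (ContinuousLinearMap.inl ℝ X ℝ)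

lemma ContinuousLinearMap.apply_eq_add_mul_sub (ℓ : X × ℝ →L[ℝ] ℝ) (hℓ : ℓ (0, 1) ≠ 0)
    (s : ℝ) (x : X) (t : ℝ) :
    ℓ (x, t) = s + ℓ (0, 1) * (t - (ℓ.hyperplaneSlope x + s / ℓ (0, 1))) := by
  have : ℓ (x, t) = ℓ (x, 0) + t * ℓ (0, 1) := by
    rw [← smul_eq_mul, ← map_smul, ← map_add]; simp
  simp only [hyperplaneSlope, smul_apply, comp_apply, inl_apply, smul_eq_mul, this]
  field_simp
  ring

lemma affine_le_of_forall_realEpigraph_le {f : X → EReal} {ℓ : X × ℝ →L[ℝ] ℝ}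
    (hℓ : 0 < ℓ (0, 1)) {s : ℝ} (hs : ∀ p ∈ realEpigraph f, s ≤ ℓ p) (x : X) :
    ((ℓ.hyperplaneSlope x + s / ℓ (0, 1) : ℝ) : EReal) ≤ f x := by
  refine EReal.le_of_forall_lt_iff_le.1 fun t ht => ?_
  have := hs (x, t) ht.le
  rw [ℓ.apply_eq_add_mul_sub hℓ.ne' s] at this
  exact_mod_cast sub_nonneg.1 (nonneg_of_mul_nonneg_right (by linarith) hℓ)

lemma exists_affine_le {f : X → EReal} (hlsc : LowerSemicontinuous f)
    (hconv : ERealConvexOn univ f) {z : X} {t : ℝ} (hz : f z = t) :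
    ∃ (a : X →L[ℝ] ℝ) (b : ℝ), ∀ x, ((a x + b : ℝ) : EReal) ≤ f x := by
  have hnot : (z, t - 1) ∉ realEpigraph f := fun h => by
    have : f z ≤ ((t - 1 : ℝ) : EReal) := h
    rw [hz, EReal.coe_le_coe_iff] at this
    linarith
  obtain ⟨ℓ, s, hℓz, hℓ⟩ :=
    geometric_hahn_banach_point_closed hconv.convex_realEpigraph hlsc.isClosed_realEpigraph hnot
  have hpos : 0 < ℓ (0, 1) := by
    have hsplit : ℓ (z, t) = ℓ (z, t - 1) + ℓ (0, 1) := by rw [← map_add]; simp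
    linarith [hℓ (z, t) hz.le]
  exact ⟨_, _, affine_le_of_forall_realEpigraph_le hpos fun p hp => (hℓ p hp).le⟩

theorem ERealConvexOn.exists_mem_convexSubdiff_of_concave_le {f : X → EReal}
    (hconv : ERealConvexOn univ f) {q : X → ℝ} (hq : ConcaveOn ℝ univ q) (hqc : Continuous q)
    (hqf : ∀ x, (q x : EReal) ≤ f x) {u : X} (hu : f u = q u) :
    ∃ v ∈ ConvexSubdiff f u, ∀ x, q x ≤ q u + v (x - u) := by
  have hA_open : IsOpen {p : X × ℝ | p.1 ∈ univ ∧ p.2 < q p.1} := by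
    simp only [mem_univ, true_and]
    exact isOpen_lt continuous_snd (hqc.comp continuous_fst)
  have hdisj : Disjoint {p : X × ℝ | p.1 ∈ univ ∧ p.2 < q p.1} (realEpigraph f) :=
    disjoint_left.2 fun p hpA hpB =>
      hpA.2.not_ge (EReal.coe_le_coe_iff.1 ((hqf p.1).trans hpB))
  obtain ⟨ℓ, s, hA, hB⟩ := geometric_hahn_banach_open hq.convex_strict_hypograph hA_open
    hconv.convex_realEpigraph hdisj
  have hpos : 0 < ℓ (0, 1) := by
    have hsplit : ℓ (u, q u) = ℓ (u, q u - 1) + ℓ (0, 1) := by rw [← map_add]; simp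
    linarith [hA (u, q u - 1) ⟨mem_univ _, by linarith⟩, hB (u, q u) hu.le]
  set α : X → ℝ := fun x => ℓ.hyperplaneSlope x + s / ℓ (0, 1)
  have hαf : ∀ x, (α x : EReal) ≤ f x := affine_le_of_forall_realEpigraph_le hpos hB
  have hqα : ∀ x, q x ≤ α x := fun x => by
    by_contra! h
    have := hA (x, α x) ⟨mem_univ _, h⟩
    rw [ℓ.apply_eq_add_mul_sub hpos.ne' s] at this
    simp [α] at this
  have hαu : α u = q u := le_antisymm (by exact_mod_cast (hαf u).trans hu.le) (hqα u)
  have hα : ∀ x, α x = q u + ℓ.hyperplaneSlope (x - u) := fun x => by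
    simp only [α, map_sub] at hαu ⊢
    linarith
  refine ⟨ℓ.hyperplaneSlope, fun x => ?_, fun x => (hqα x).trans (hα x).le⟩
  rw [hu, ← EReal.coe_add, ← hα]
  exact hαf x

theorem exists_mem_convexSubdiff_of_bddBelow_add [CompleteSpace X] {f : X → EReal}
    (hlsc : LowerSemicontinuous f) (hconv : ERealConvexOn univ f) {c : X → ℝ}
    (hc : ConvexOn ℝ univ c) (hcc : Continuous c) {m : ℝ} (hm : ∀ x, (m : EReal) ≤ f x + c x)
    {y : X} (hy : f y ≠ ⊤) {δ : ℝ} (hδ : 0 < δ) :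
    ∃ u, ∃ v ∈ ConvexSubdiff f u,
      f u + c u ≤ f y + c y ∧ ∀ x, c u - v (x - u) ≤ c x + δ * dist x u := by
  obtain ⟨u, hu_y, hu⟩ := (hlsc.add_coe_real hcc).exists_le_forall_le_add_mul_dist_of_ereal hm
    (EReal.add_ne_top hy (EReal.coe_ne_top _)) hδ
  have hu_top : f u ≠ ⊤ := fun h => EReal.add_ne_top hy (EReal.coe_ne_top (c y))
    (top_le_iff.1 (by simpa [h] using hu_y))
  have hu_bot : f u ≠ ⊥ := fun h => by simpa [h] using hm u
  obtain ⟨fu, hfu⟩ : ∃ fu : ℝ, f u = fu := ⟨_, (EReal.coe_toReal hu_top hu_bot).symm⟩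
  -- `u` minimizes `f + c + δ * dist · u`, so `f` lies above the concave function `q`
  set q : X → ℝ := fun x => fu + c u - (c x + δ * dist x u)
  have hq : ConcaveOn ℝ univ q :=
    (concaveOn_const _ convex_univ).sub (hc.add ((convexOn_dist u convex_univ).smul hδ.le))
  have hqf : ∀ x, (q x : EReal) ≤ f x := fun x => by
    have := EReal.sub_le_of_le_add ((hu x).trans_eq (add_assoc _ _ _))
    rwa [hfu, ← EReal.coe_add, ← EReal.coe_add, ← EReal.coe_sub] at this
  obtain ⟨v, hv, hvq⟩ := hconv.exists_mem_convexSubdiff_of_concave_le hq (by fun_prop)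
    hqf (u := u) (by simp [q, hfu])
  refine ⟨u, v, hv, hu_y, fun x => ?_⟩
  have := hvq x
  simp only [q, dist_self, mul_zero] at this
  linarith

lemma apply_sub_mul_le_apply_add_mul_max (a s : X →L[ℝ] ℝ) (z x : X) (R : ℝ) :
    a z - (‖a‖ + ‖s‖) * R ≤ a x - s (x - z) + (‖a‖ + ‖s‖) * max (dist x z - R) 0 := by
  have ha := abs_le.1 ((Real.norm_eq_abs _).symm.trans_le (a.le_opNorm (x - z)))
  have hs := abs_le.1 ((Real.norm_eq_abs _).symm.trans_le (s.le_opNorm (x - z)))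
  have hmax := mul_le_mul_of_nonneg_left (le_max_left (dist x z - R) 0)
    (add_nonneg (norm_nonneg a) (norm_nonneg s))
  rw [map_sub] at ha
  rw [dist_eq_norm] at hmax ⊢
  linarith

lemma add_apply_le_add_mul_dist_of_monotone_related [CompleteSpace X] {f : X → EReal}
    (hlsc : LowerSemicontinuous f) (hconv : ERealConvexOn univ f) {xh : X} {sh : X →L[ℝ] ℝ}
    (hrel : ∀ u, ∀ v ∈ ConvexSubdiff f u, 0 ≤ (v - sh) (u - xh)) {y : X} {fy : ℝ}
    (hy : f y = fy) {k : ℝ} (hk : 0 < k) :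
    f xh + sh (y - xh) ≤ ((fy + k * dist y xh : ℝ) : EReal) := by
  obtain ⟨a, b, hab⟩ := exists_affine_le hlsc hconv hy
  set R := dist y xh
  set K := ‖a‖ + ‖sh‖
  have hK : 0 ≤ K := add_nonneg (norm_nonneg a) (norm_nonneg sh)
  -- the penalty `c` makes `f + c` bounded below while vanishing at `xh` and costing `k R` at `y`
  set c : X → ℝ := fun x => k * dist x xh + K * max (dist x xh - R) 0 - sh (x - xh)
  have hc : ConvexOn ℝ univ c := by
    have h := ((((convexOn_dist xh convex_univ).smul hk.le).add
      ((((convexOn_dist xh convex_univ).add_const (-R)).sup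
        (convexOn_const 0 convex_univ)).smul hK)).sub
      ((sh : X →ₗ[ℝ] ℝ).concaveOn convex_univ)).add_const (sh xh)
    refine h.congr fun x _ => ?_
    simp [c, sub_eq_add_neg]
    ring
  have hm : ∀ x, ((a xh + b - K * R : ℝ) : EReal) ≤ f x + c x := fun x => by
    refine le_trans ?_ (add_le_add_left (hab x) _)
    rw [← EReal.coe_add, EReal.coe_le_coe_iff]
    have := apply_sub_mul_le_apply_add_mul_max a sh xh x R
    nlinarith [mul_nonneg hk.le (dist_nonneg (x := x) (y := xh))]
  obtain ⟨u, v, hv, hu_y, hvu⟩ := exists_mem_convexSubdiff_of_bddBelow_add hlsc hconv hc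
    (by fun_prop) hm (hy ▸ EReal.coe_ne_top fy) (half_pos hk)
  have hR : max (-R) 0 = 0 := max_eq_right (neg_nonpos.2 dist_nonneg)
  have huxh : u = xh := by
    have h₁ := hvu xh
    have h₂ := hrel u v hv
    have h₃ := mul_nonneg hK (le_max_right (dist u xh - R) 0)
    simp only [c, dist_self, sub_self, zero_sub, map_zero, hR, mul_zero, zero_add,
      dist_comm xh u] at h₁
    rw [sub_apply, ← neg_sub u xh, map_neg] at *
    exact dist_le_zero.1 (by nlinarith [dist_nonneg (x := u) (y := xh)])
  have hcxh : c xh = 0 := by simp [c, hR]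
  have hcy : c y = k * R - sh (y - xh) := by simp [c, R]
  rw [huxh, hcxh, hcy, hy, EReal.coe_zero, add_zero] at hu_y
  calc f xh + sh (y - xh) ≤ fy + ((k * R - sh (y - xh) : ℝ) : EReal) + sh (y - xh) := by
        gcongr
    _ = ((fy + k * R : ℝ) : EReal) := by
        rw [← EReal.coe_add, ← EReal.coe_add]
        ring_nf

lemma mem_convexSubdiff_of_monotone_related [CompleteSpace X] {f : X → EReal}
    (hlsc : LowerSemicontinuous f) (hconv : ERealConvexOn univ f) (hnb : ∀ x, f x ≠ ⊥)
    {xh : X} {sh : X →L[ℝ] ℝ} (hrel : ∀ u, ∀ v ∈ ConvexSubdiff f u, 0 ≤ (v - sh) (u - xh)) :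
    sh ∈ ConvexSubdiff f xh := fun y => by
  rcases eq_or_ne (f y) ⊤ with hy | hy
  · simp [hy]
  obtain ⟨fy, hfy⟩ : ∃ fy : ℝ, f y = fy := ⟨_, (EReal.coe_toReal hy (hnb y)).symm⟩
  rw [hfy]
  refine EReal.le_of_forall_lt_iff_le.1 fun z hz => ?_
  have hz' : 0 < z - fy := sub_pos.2 (EReal.coe_lt_coe_iff.1 hz)
  have hd : 0 < dist y xh + 1 := by positivity
  refine (add_apply_le_add_mul_dist_of_monotone_related hlsc hconv hrel hfy
    (div_pos hz' hd)).trans (EReal.coe_le_coe_iff.2 ?_)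
  have : (z - fy) / (dist y xh + 1) * dist y xh ≤ z - fy := by
    rw [div_mul_eq_mul_div, div_le_iff₀ hd]
    nlinarith [dist_nonneg (x := y) (y := xh)]
  linarith

lemma monotoneOperator_convexSubdiff {f : X → EReal} (hnb : ∀ x, f x ≠ ⊥) {z : X}
    (hz : f z ≠ ⊤) : MonotoneOperator (ConvexSubdiff f) := by
  have hfin : ∀ {x v}, v ∈ ConvexSubdiff f x → ∃ t : ℝ, f x = t := fun {x} _ hv => by
    have hx : f x ≠ ⊤ := fun h =>
      hz (top_le_iff.1 ((hv z).trans_eq' (by rw [h, EReal.top_add_coe])))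
    exact ⟨_, (EReal.coe_toReal hx (hnb x)).symm⟩
  intro x₁ x₂ v₁ hv₁ v₂ hv₂
  obtain ⟨t₁, ht₁⟩ := hfin hv₁
  obtain ⟨t₂, ht₂⟩ := hfin hv₂
  have h₁ := hv₁ x₂
  have h₂ := hv₂ x₁
  rw [ht₁, ht₂, ← EReal.coe_add, EReal.coe_le_coe_iff] at h₁ h₂
  simp only [sub_apply, map_sub] at h₁ h₂ ⊢
  linarith

/-- Rockafellar's maximal monotonicity theorem. -/
theorem maximalMonotoneOperator_convexSubdiff [CompleteSpace X] {f : X → EReal}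
    (hlsc : LowerSemicontinuous f) (hconv : ERealConvexOn univ f) (hnb : ∀ x, f x ≠ ⊥)
    {z : X} (hz : f z ≠ ⊤) : MaximalMonotoneOperator (ConvexSubdiff f) :=
  ⟨monotoneOperator_convexSubdiff hnb hz, fun _ hS hsub x =>
    (Subset.antisymm (fun s hs => mem_convexSubdiff_of_monotone_related hlsc hconv hnb
      fun u v hv => hS u x v (hsub u hv) s hs) (hsub x))⟩

lemma ERealConvexOn.eq_top_of_eq_bot {f : X → EReal} (hconv : ERealConvexOn univ f)
    (hlsc : LowerSemicontinuous f) {w : X} (hw : f w = ⊥) {x : X} (hx : f x ≠ ⊥) :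
    f x = ⊤ := by
  by_contra hxt
  obtain ⟨r, hr⟩ : ∃ r : ℝ, f x = r := ⟨_, (EReal.coe_toReal hxt hx).symm⟩
  have hseg : ∀ t : ℝ, 0 < t → t ≤ 1 → f (t • w + (1 - t) • x) = ⊥ := fun t ht ht₁ =>
    le_bot_iff.1 <| (hconv w (mem_univ w) x (mem_univ x) t ht.le ht₁).trans_eq <| by
      rw [hw, hr, EReal.coe_mul_bot_of_pos ht, ← EReal.coe_mul, EReal.bot_add]
  have hnear : ∀ᶠ x' in 𝓝 x, ((r - 1 : ℝ) : EReal) < f x' :=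
    hlsc x _ (show ((r - 1 : ℝ) : EReal) < f x by rw [hr]; exact_mod_cast sub_one_lt r)
  have hpath : Tendsto (fun t : ℝ => t • w + (1 - t) • x) (𝓝[>] 0) (𝓝 x) := by
    have : Continuous fun t : ℝ => t • w + (1 - t) • x := by fun_prop
    simpa using (this.tendsto 0).mono_left nhdsWithin_le_nhds
  obtain ⟨t, hft, ht⟩ := ((hpath.eventually hnear).and (Ioo_mem_nhdsGT one_pos)).exists
  rw [hseg t ht.1 ht.2.le] at hft
  exact not_lt_bot hft

theorem variationallyConvex_implies_local_maximal_monotone_general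
    [CompleteSpace X] (φ : X → EReal)
    (hnb : ∀ x, φ x ≠ ⊥) (xbar : X) (xsbar : X →L[ℝ] ℝ)
    (hvc : VariationallyConvexAt φ xbar xsbar) :
    ∃ (U : Set X) (V : Set (X →L[ℝ] ℝ)) (ε : ℝ)
      (Tbar : X → Set (X →L[ℝ] ℝ)),
      IsOpen U ∧ xbar ∈ U ∧ IsOpen V ∧ xsbar ∈ V ∧ 0 < ε ∧
      MaximalMonotoneOperator Tbar ∧
      ∀ (x : X) (xs : X →L[ℝ] ℝ),
        x ∈ U → φ x < φ xbar + (ε : EReal) → xs ∈ V →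
        (xs ∈ Tbar x ↔ xs ∈ LimitingSubdiff φ x) := by
  obtain ⟨U, V, hU, -, hxU, hV, -, hxsV, φhat, ε, hε, hconv, hlsc, hle, hiff, heq⟩ := hvc
  by_cases hproper : (∀ x, φhat x ≠ ⊥) ∧ ∃ z, φhat z ≠ ⊤
  · obtain ⟨hnb', z, hz⟩ := hproper
    exact ⟨U, V, ε, ConvexSubdiff φhat, hU, hxU, hV, hxsV, hε,
      maximalMonotoneOperator_convexSubdiff hlsc hconv hnb' hz, fun x xs hx hφ hxs =>
        ⟨fun h => ((hiff x xs).2 ⟨hx, hxs, h⟩).2.2.2,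
          fun h => ((hiff x xs).1 ⟨hx, hφ, hxs, h⟩).2.2⟩⟩
  -- otherwise `φ = ⊤` on `U`, so the localization is empty and any maximal monotone operator works
  have htop : ∀ x ∈ U, φ x = ⊤ := fun x hx => by
    have hx_bot : φhat x ≠ ⊥ := fun h =>
      hnb x ((heq x xsbar ⟨hx, hxsV, fun y => by simp [h]⟩).trans h)
    have hx_top : φhat x = ⊤ := by
      by_cases hall : ∀ y, φhat y ≠ ⊥
      · by_contra hx_top
        exact hproper ⟨hall, x, hx_top⟩
      · push Not at hall
        obtain ⟨w, hw⟩ := hall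
        exact hconv.eq_top_of_eq_bot hlsc hw hx_bot
    exact top_le_iff.1 (hx_top ▸ hle x hx)
  refine ⟨U, V, ε, ConvexSubdiff fun _ => 0, hU, hxU, hV, hxsV, hε,
    maximalMonotoneOperator_convexSubdiff lowerSemicontinuous_const
      (fun _ _ _ _ _ _ _ => by simp) (fun _ => EReal.zero_ne_bot) (z := 0) EReal.zero_ne_top,
    fun x xs hx hφ _ => ?_⟩
  rw [htop x hx, htop xbar hxU, EReal.top_add_coe] at hφ
  exact (lt_irrefl ⊤ hφ).elim

/-- variational convexity implies `φ`-local maximal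
monotonicity of the limiting subdifferential. -/
theorem variationallyConvex_implies_local_maximal_monotone
    [CompleteSpace X] (φ : X → EReal) (hlsc : LowerSemicontinuous φ)
    (hnb : ∀ x, φ x ≠ ⊥) (xbar : X) (xsbar : X →L[ℝ] ℝ)
    (hsub : xsbar ∈ LimitingSubdiff φ xbar)
    (hvc : VariationallyConvexAt φ xbar xsbar) :
    ∃ (U : Set X) (V : Set (X →L[ℝ] ℝ)) (ε : ℝ)
      (Tbar : X → Set (X →L[ℝ] ℝ)),
      IsOpen U ∧ xbar ∈ U ∧ IsOpen V ∧ xsbar ∈ V ∧ 0 < ε ∧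
      MaximalMonotoneOperator Tbar ∧
      ∀ (x : X) (xs : X →L[ℝ] ℝ),
        x ∈ U → φ x < φ xbar + (ε : EReal) → xs ∈ V →
        (xs ∈ Tbar x ↔ xs ∈ LimitingSubdiff φ x) :=
  variationallyConvex_implies_local_maximal_monotone_general φ hnb xbar xsbar hvc
end
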